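/- (Conditional Erdős–Rényi) Let {Aₙ} be events and ℱ a sub-σ-algebra such that ∑_{n=1}^∞ P(Aₙ | ℱ) = ∞ almost surely and limsup_{n→∞} (∑_{i,k=1}^{n} P(Aᵢ ∩ A_k | ℱ)) / (∑_{k=1}^{n} P(A_k | ℱ))² = 1 almost surely. Then P(limsup Aₙ | ℱ) = 1 almost surely. -/

import Mathlib

open MeasureTheory Filter

noncomputable def cprob {Ω : Type*} {mΩ : MeasurableSpace Ω} (μ : Measure Ω)
    (𝓕 : MeasurableSpace Ω) (A : Set Ω) : Ω → ℝ :=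
  μ[A.indicator (fun _ => (1 : ℝ)) | 𝓕]

section Aux

variable {Ω : Type*} {mΩ : MeasurableSpace Ω} (μ : Measure Ω) [IsProbabilityMeasure μ]

lemma ind_int {s : Set Ω} (hs : MeasurableSet s) :
    Integrable (s.indicator (fun _ => (1 : ℝ))) μ :=
  (integrable_const (1 : ℝ)).indicator hs

lemma cprob_nonneg (𝓕 : MeasurableSpace Ω) (s : Set Ω) :
    ∀ᵐ ω ∂μ, 0 ≤ cprob μ 𝓕 s ω := by
  filter_upwards [condExp_nonneg (μ := μ) (m := 𝓕)
    (Eventually.of_forall fun ω => Set.indicator_nonneg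
      (f := fun _ => (1:ℝ)) (fun _ _ => zero_le_one) ω)] with ω h
  exact h

lemma cprob_le_one {𝓕 : MeasurableSpace Ω} (h𝓕 : 𝓕 ≤ mΩ) {s : Set Ω}
    (hs : MeasurableSet[mΩ] s) :
    ∀ᵐ ω ∂μ, cprob μ 𝓕 s ω ≤ 1 := by
  have hle : s.indicator (fun _ => (1:ℝ)) ≤ᵐ[μ] fun _ => (1:ℝ) :=
    Eventually.of_forall fun ω => by
      by_cases h : ω ∈ s <;> simp [Set.indicator, h]
  have h := condExp_mono (μ := μ) (m := 𝓕) (ind_int μ hs) (integrable_const (1 : ℝ)) hle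
  rw [condExp_const h𝓕] at h
  filter_upwards [h] with ω hω using hω

lemma cprob_mono (𝓕 : MeasurableSpace Ω) {s t : Set Ω} (hs : MeasurableSet[mΩ] s)
    (ht : MeasurableSet[mΩ] t) (hst : s ⊆ t) :
    ∀ᵐ ω ∂μ, cprob μ 𝓕 s ω ≤ cprob μ 𝓕 t ω := by
  filter_upwards [condExp_mono (μ := μ) (m := 𝓕) (ind_int μ hs) (ind_int μ ht)
    (Eventually.of_forall fun ω =>
      Set.indicator_le_indicator_of_subset hst (fun _ => zero_le_one) ω)] with ω h using h

lemma integral_ind {s : Set Ω} (hs : MeasurableSet s) :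
    ∫ ω, s.indicator (fun _ => (1 : ℝ)) ω ∂μ = (μ s).toReal := by
  simpa [Measure.real, Pi.one_def] using integral_indicator_one (μ := μ) hs

lemma integral_cprob {𝓕 : MeasurableSpace Ω} (h𝓕 : 𝓕 ≤ mΩ) {s : Set Ω}
    (hs : MeasurableSet[mΩ] s) :
    ∫ ω, cprob μ 𝓕 s ω ∂μ = (μ s).toReal := by
  rw [show (fun ω => cprob μ 𝓕 s ω) = cprob μ 𝓕 s from rfl, cprob,
    integral_condExp h𝓕]
  exact integral_ind μ hs

/-- Key conditional Cauchy-Schwarz / Paley-Zygmund inequality. -/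
lemma key_ineq {𝓕 : MeasurableSpace Ω} (h𝓕 : 𝓕 ≤ mΩ) (A : ℕ → Set Ω)
    (hA : ∀ n, MeasurableSet[mΩ] (A n)) (m n : ℕ) :
    ∀ᵐ ω ∂μ, (∑ k ∈ Finset.Icc m n, cprob μ 𝓕 (A k) ω) ^ 2 ≤
      (∑ i ∈ Finset.Icc m n, ∑ k ∈ Finset.Icc m n, cprob μ 𝓕 (A i ∩ A k) ω) *
        cprob μ 𝓕 (⋃ k ∈ Finset.Icc m n, A k) ω := by
  classical
  set ind : Set Ω → Ω → ℝ := fun s => s.indicator (fun _ => (1 : ℝ)) with hind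
  set U : Set Ω := ⋃ k ∈ Finset.Icc m n, A k with hU
  have hUm : MeasurableSet[mΩ] U :=
    MeasurableSet.biUnion (Finset.Icc m n).countable_toSet (fun k _ => hA k)
  set N : Ω → ℝ := fun ω => ∑ k ∈ Finset.Icc m n, ind (A k) ω with hN
  set P2 : Ω → ℝ := fun ω => ∑ i ∈ Finset.Icc m n, ∑ k ∈ Finset.Icc m n,
    ind (A i ∩ A k) ω with hP2
  have hNint : Integrable N μ := integrable_finset_sum _ (fun k _ => ind_int μ (hA k))
  have hP2int : Integrable P2 μ := integrable_finset_sum _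
    (fun i _ => integrable_finset_sum _ (fun k _ => ind_int μ ((hA i).inter (hA k))))
  have hUint : Integrable (ind U) μ := ind_int μ hUm
  -- pointwise identities
  have hmul : ∀ (s t : Set Ω) (ω : Ω), ind s ω * ind t ω = ind (s ∩ t) ω := by
    intro s t ω
    by_cases hs : ω ∈ s <;> by_cases ht : ω ∈ t <;>
      simp [hind, Set.indicator, hs, ht]
  have hNsq : ∀ ω, N ω ^ 2 = P2 ω := by
    intro ω
    rw [sq, hN, Finset.sum_mul_sum]
    exact Finset.sum_congr rfl fun i _ => Finset.sum_congr rfl fun k _ => hmul _ _ ω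
  have hnotU : ∀ ω, ω ∉ U → N ω = 0 ∧ P2 ω = 0 ∧ ind U ω = 0 := by
    intro ω hω
    have hmem : ∀ k ∈ Finset.Icc m n, ω ∉ A k := by
      intro k hk hk'
      exact hω (Set.mem_biUnion hk hk')
    refine ⟨Finset.sum_eq_zero fun k hk => Set.indicator_of_notMem (hmem k hk) _, ?_, ?_⟩
    · refine Finset.sum_eq_zero fun i hi => Finset.sum_eq_zero fun k hk => ?_
      exact Set.indicator_of_notMem (fun h => hmem i hi h.1) _
    · exact Set.indicator_of_notMem hω _
  -- for each rational q, conditional expectation of the square is nonneg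
  have hquad : ∀ᵐ ω ∂μ, ∀ q : ℚ,
      0 ≤ (∑ i ∈ Finset.Icc m n, ∑ k ∈ Finset.Icc m n, cprob μ 𝓕 (A i ∩ A k) ω)
        - 2 * (q : ℝ) * (∑ k ∈ Finset.Icc m n, cprob μ 𝓕 (A k) ω)
        + (q : ℝ) ^ 2 * cprob μ 𝓕 U ω := by
    rw [ae_all_iff]
    intro q
    set t : ℝ := (q : ℝ) with ht
    set G : Ω → ℝ := fun ω => P2 ω - (2 * t) * N ω + t ^ 2 * ind U ω with hG
    have hGsq : ∀ ω, G ω = (N ω - t * ind U ω) ^ 2 := by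
      intro ω
      by_cases hω : ω ∈ U
      · have h1 : ind U ω = 1 := Set.indicator_of_mem hω _
        have := hNsq ω
        simp only [hG, h1, mul_one]
        nlinarith [hNsq ω]
      · obtain ⟨h1, h2, h3⟩ := hnotU ω hω
        simp [hG, h1, h2, h3]
    have hGnonneg : 0 ≤ᵐ[μ] G :=
      Eventually.of_forall fun ω => (hGsq ω) ▸ sq_nonneg _
    have hcond0 : 0 ≤ᵐ[μ] μ[G|𝓕] := condExp_nonneg hGnonneg
    -- expand conditional expectation of G
    have hGdecomp : G = (P2 - (2 * t) • N) + (t ^ 2) • ind U := by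
      funext ω
      simp only [hG, Pi.add_apply, Pi.sub_apply, Pi.smul_apply, smul_eq_mul]
    have hexp : μ[G|𝓕] =ᵐ[μ] μ[P2|𝓕] - (2 * t) • μ[N|𝓕] + (t ^ 2) • μ[ind U|𝓕] := by
      rw [hGdecomp]
      have hint1 : Integrable (P2 - (2 * t) • N) μ := hP2int.sub (hNint.smul (2 * t))
      refine (condExp_add hint1 (hUint.smul (t ^ 2)) 𝓕).trans ?_
      refine EventuallyEq.add ?_ (condExp_smul (t ^ 2) (ind U) 𝓕)
      exact (condExp_sub hP2int (hNint.smul (2 * t)) 𝓕).trans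
        (EventuallyEq.sub (EventuallyEq.refl _ _) (condExp_smul (2 * t) N 𝓕))
    have hNcond : μ[N|𝓕] =ᵐ[μ] fun ω => ∑ k ∈ Finset.Icc m n, cprob μ 𝓕 (A k) ω := by
      have h0 : N = ∑ k ∈ Finset.Icc m n, ind (A k) := by
        funext ω; simp [hN, Finset.sum_apply]
      rw [h0]
      refine (condExp_finset_sum (fun k _ => ind_int μ (hA k)) 𝓕).trans ?_
      exact Eventually.of_forall fun ω => by simp [Finset.sum_apply, cprob, hind]
    have hP2cond : μ[P2|𝓕] =ᵐ[μ] fun ω => ∑ i ∈ Finset.Icc m n, ∑ k ∈ Finset.Icc m n,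
        cprob μ 𝓕 (A i ∩ A k) ω := by
      have h0 : P2 = ∑ i ∈ Finset.Icc m n,
          (fun ω => ∑ k ∈ Finset.Icc m n, ind (A i ∩ A k) ω) := by
        funext ω; simp [hP2, Finset.sum_apply]
      rw [h0]
      refine (condExp_finset_sum (fun i _ =>
        integrable_finset_sum _ fun k _ => ind_int μ ((hA i).inter (hA k))) 𝓕).trans ?_
      have h2 : ∀ i : ℕ, μ[fun ω => ∑ k ∈ Finset.Icc m n, ind (A i ∩ A k) ω|𝓕] =ᵐ[μ]
          fun ω => ∑ k ∈ Finset.Icc m n, cprob μ 𝓕 (A i ∩ A k) ω := by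
        intro i
        have h0' : (fun ω => ∑ k ∈ Finset.Icc m n, ind (A i ∩ A k) ω)
            = ∑ k ∈ Finset.Icc m n, ind (A i ∩ A k) := by
          funext ω; simp [Finset.sum_apply]
        rw [h0']
        refine (condExp_finset_sum (fun k _ => ind_int μ ((hA i).inter (hA k))) 𝓕).trans ?_
        exact Eventually.of_forall fun ω => by simp [Finset.sum_apply, cprob, hind]
      have h3 : ∀ᵐ x ∂μ, ∀ i : ℕ,
          (μ[fun ω => ∑ k ∈ Finset.Icc m n, ind (A i ∩ A k) ω|𝓕]) x =
            ∑ k ∈ Finset.Icc m n, cprob μ 𝓕 (A i ∩ A k) x := by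
        rw [ae_all_iff]
        intro i; exact h2 i
      filter_upwards [h3] with ω hω
      rw [Finset.sum_apply]
      exact Finset.sum_congr rfl fun i _ => hω i
    filter_upwards [hcond0, hexp, hNcond, hP2cond] with ω h0 h1 h2 h3
    have := h0.trans_eq h1
    simp only [Pi.add_apply, Pi.sub_apply, Pi.smul_apply, Pi.zero_apply, smul_eq_mul,
      h2, h3] at this
    have h4 : (μ[ind U|𝓕]) ω = cprob μ 𝓕 U ω := rfl
    rw [← h4]
    linarith [this]
  filter_upwards [hquad, cprob_nonneg μ 𝓕 U] with ω hω hW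
  set S' : ℝ := ∑ k ∈ Finset.Icc m n, cprob μ 𝓕 (A k) ω with hS'
  set T' : ℝ := ∑ i ∈ Finset.Icc m n, ∑ k ∈ Finset.Icc m n, cprob μ 𝓕 (A i ∩ A k) ω with hT'
  set W : ℝ := cprob μ 𝓕 U ω with hW'
  have hall : ∀ x : ℝ, 0 ≤ W * (x * x) + (-2 * S') * x + T' := by
    have hsub : Set.range ((↑) : ℚ → ℝ) ⊆ {x : ℝ | 0 ≤ W * (x * x) + (-2 * S') * x + T'} := by
      rintro _ ⟨q, rfl⟩
      have := hω q
      simp only [Set.mem_setOf_eq]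
      nlinarith [this]
    have hcl : IsClosed {x : ℝ | 0 ≤ W * (x * x) + (-2 * S') * x + T'} :=
      isClosed_le continuous_const
        (((continuous_const.mul (continuous_id.mul continuous_id)).add
          (continuous_const.mul continuous_id)).add continuous_const)
    intro x
    have : (Set.univ : Set ℝ) ⊆ {x : ℝ | 0 ≤ W * (x * x) + (-2 * S') * x + T'} := by
      rw [← (Rat.denseRange_cast (𝕜 := ℝ)).closure_eq]
      exact closure_minimal hsub hcl
    exact this (Set.mem_univ x)
  have hd := discrim_le_zero hall
  rw [discrim] at hd
  nlinarith [hd]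

end Aux

lemma isBoundedUnder_of_limsup_eq_one {f : ℕ → ℝ} (h : limsup f atTop = 1) :
    IsBoundedUnder (· ≤ ·) atTop f := by
  by_contra hb
  have hset : {a : ℝ | ∀ᶠ n in atTop, f n ≤ a} = ∅ := by
    ext a
    simp only [Set.mem_setOf_eq, Set.mem_empty_iff_false, iff_false]
    intro ha
    exact hb ⟨a, eventually_map.2 ha⟩
  rw [limsup, limsSup] at h
  have : {a : ℝ | ∀ᶠ (n : ℝ) in Filter.map f atTop, n ≤ a} = ∅ := by
    ext a
    simp only [Set.mem_setOf_eq, Set.mem_empty_iff_false, iff_false, eventually_map]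
    intro ha
    exact hb ⟨a, eventually_map.2 ha⟩
  rw [this, Real.sInf_empty] at h
  norm_num at h

theorem stmt_14 {Ω : Type*} (𝓕 : MeasurableSpace Ω) {mΩ : MeasurableSpace Ω} (μ : Measure Ω)
    [IsProbabilityMeasure μ] (h𝓕 : 𝓕 ≤ mΩ)
    (A : ℕ → Set Ω) (hA : ∀ n, MeasurableSet (A n))
    (hdiv : ∀ᵐ ω ∂μ, Tendsto
      (fun N => ∑ k ∈ Finset.Icc 1 N, cprob μ 𝓕 (A k) ω) atTop atTop)
    (hratio : ∀ᵐ ω ∂μ,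
      limsup (fun n => (∑ i ∈ Finset.Icc 1 n, ∑ k ∈ Finset.Icc 1 n,
          cprob μ 𝓕 (A i ∩ A k) ω) /
        (∑ k ∈ Finset.Icc 1 n, cprob μ 𝓕 (A k) ω) ^ 2) atTop = 1) :
    cprob μ 𝓕 (limsup A atTop) =ᵐ[μ] 1 := by
  classical
  have hA' : ∀ n, MeasurableSet[mΩ] (A n) := fun n => hA n
  set B : ℕ → Set Ω := fun m => ⋃ k, ⋃ (_ : m ≤ k), A k with hB
  have hBm : ∀ m, MeasurableSet[mΩ] (B m) := fun m =>
    MeasurableSet.iUnion fun k => MeasurableSet.iUnion fun _ => hA' k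
  -- step 1 : each B (m+1) has conditional probability ≥ 1 a.e.
  have hstep1 : ∀ m : ℕ, ∀ᵐ ω ∂μ, 1 ≤ cprob μ 𝓕 (B (m + 1)) ω := by
    intro m
    have hkey : ∀ᵐ ω ∂μ, ∀ n : ℕ,
        (∑ k ∈ Finset.Icc (m + 1) n, cprob μ 𝓕 (A k) ω) ^ 2 ≤
          (∑ i ∈ Finset.Icc (m + 1) n, ∑ k ∈ Finset.Icc (m + 1) n,
            cprob μ 𝓕 (A i ∩ A k) ω) * cprob μ 𝓕 (⋃ k ∈ Finset.Icc (m + 1) n, A k) ω := by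
      rw [ae_all_iff]; intro n; exact key_ineq μ h𝓕 A hA' (m + 1) n
    have hmono : ∀ᵐ ω ∂μ, ∀ n : ℕ,
        cprob μ 𝓕 (⋃ k ∈ Finset.Icc (m + 1) n, A k) ω ≤ cprob μ 𝓕 (B (m + 1)) ω := by
      rw [ae_all_iff]; intro n
      refine cprob_mono μ 𝓕
        (MeasurableSet.biUnion (Finset.Icc (m+1) n).countable_toSet (fun k _ => hA' k))
        (hBm (m+1)) ?_
      intro ω hω
      obtain ⟨k, hk, hωk⟩ := Set.mem_iUnion₂.1 hω
      exact Set.mem_iUnion₂.2 ⟨k, (Finset.mem_Icc.1 hk).1, hωk⟩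
    have hUnonneg : ∀ᵐ ω ∂μ, ∀ n : ℕ,
        0 ≤ cprob μ 𝓕 (⋃ k ∈ Finset.Icc (m + 1) n, A k) ω := by
      rw [ae_all_iff]; intro n; exact cprob_nonneg μ 𝓕 _
    have hik : ∀ᵐ ω ∂μ, ∀ i k : ℕ, 0 ≤ cprob μ 𝓕 (A i ∩ A k) ω := by
      rw [ae_all_iff]; intro i; rw [ae_all_iff]; intro k; exact cprob_nonneg μ 𝓕 _
    have hknn : ∀ᵐ ω ∂μ, ∀ k : ℕ, 0 ≤ cprob μ 𝓕 (A k) ω := by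
      rw [ae_all_iff]; intro k; exact cprob_nonneg μ 𝓕 _
    filter_upwards [hdiv, hratio, hkey, hmono, hUnonneg, hik, hknn,
      cprob_le_one μ h𝓕 (hBm (m+1)), cprob_nonneg μ 𝓕 (B (m+1))] with ω
      hdivω hratω hkeyω hmonoω hUnn hikω hknnω hVle hVnn
    set V : ℝ := cprob μ 𝓕 (B (m + 1)) ω with hV
    set S : ℕ → ℝ := fun n => ∑ k ∈ Finset.Icc 1 n, cprob μ 𝓕 (A k) ω with hS
    set T : ℕ → ℝ := fun n => ∑ i ∈ Finset.Icc 1 n, ∑ k ∈ Finset.Icc 1 n,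
      cprob μ 𝓕 (A i ∩ A k) ω with hT
    set c : ℝ := ∑ k ∈ Finset.Icc 1 m, cprob μ 𝓕 (A k) ω with hc
    have hc0 : 0 ≤ c := Finset.sum_nonneg fun k _ => hknnω k
    -- main claim
    have hclaim : ∀ ε : ℝ, 0 < ε → ε < 1 → (1 - ε) ^ 2 ≤ (1 + ε) * V := by
      intro ε hε0 hε1
      have hbdd : IsBoundedUnder (· ≤ ·) atTop (fun n => T n / S n ^ 2) :=
        isBoundedUnder_of_limsup_eq_one hratω
      have hlt : limsup (fun n => T n / S n ^ 2) atTop < 1 + ε := by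
        rw [hratω]; linarith
      have hev1 : ∀ᶠ n in atTop, T n / S n ^ 2 < 1 + ε :=
        eventually_lt_of_limsup_lt hlt hbdd
      have hev2 : ∀ᶠ n in atTop, max (c / ε) 1 ≤ S n := hdivω.eventually_ge_atTop _
      have hev3 : ∀ᶠ n in atTop, m ≤ n := eventually_ge_atTop m
      obtain ⟨n, h1, h2, h3⟩ := (hev1.and (hev2.and hev3)).exists
      -- split the sum
      have hsplit : c + (∑ k ∈ Finset.Icc (m + 1) n, cprob μ 𝓕 (A k) ω) = S n := by
        show (∑ k ∈ Finset.Icc 1 m, cprob μ 𝓕 (A k) ω)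
            + (∑ k ∈ Finset.Icc (m + 1) n, cprob μ 𝓕 (A k) ω)
            = ∑ k ∈ Finset.Icc 1 n, cprob μ 𝓕 (A k) ω
        have e1 : Finset.Icc 1 m = Finset.Ioc 0 m := by rw [← Finset.Icc_add_one_left_eq_Ioc]; rfl
        have e2 : Finset.Icc (m+1) n = Finset.Ioc m n := by rw [← Finset.Icc_add_one_left_eq_Ioc]
        have e3 : Finset.Icc 1 n = Finset.Ioc 0 n := by rw [← Finset.Icc_add_one_left_eq_Ioc]; rfl
        rw [e1, e2, e3]
        exact Finset.sum_Ioc_consecutive _ (Nat.zero_le m) h3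
      have hSn1 : (1 : ℝ) ≤ S n := le_trans (le_max_right _ _) h2
      have hSnpos : 0 < S n := lt_of_lt_of_le zero_lt_one hSn1
      have hcε : c ≤ ε * S n := by
        have := le_trans (le_max_left (c / ε) 1) h2
        calc c = (c / ε) * ε := by field_simp
        _ ≤ S n * ε := by nlinarith
        _ = ε * S n := mul_comm _ _
      have hTmT : (∑ i ∈ Finset.Icc (m + 1) n, ∑ k ∈ Finset.Icc (m + 1) n,
          cprob μ 𝓕 (A i ∩ A k) ω) ≤ T n := by
        rw [hT]
        have hsub : Finset.Icc (m+1) n ⊆ Finset.Icc 1 n := by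
          intro k hk
          rw [Finset.mem_Icc] at hk ⊢
          omega
        calc (∑ i ∈ Finset.Icc (m + 1) n, ∑ k ∈ Finset.Icc (m + 1) n,
            cprob μ 𝓕 (A i ∩ A k) ω)
            ≤ ∑ i ∈ Finset.Icc (m + 1) n, ∑ k ∈ Finset.Icc 1 n, cprob μ 𝓕 (A i ∩ A k) ω := by
              refine Finset.sum_le_sum fun i _ => ?_
              exact Finset.sum_le_sum_of_subset_of_nonneg hsub fun k _ _ => hikω i k
          _ ≤ ∑ i ∈ Finset.Icc 1 n, ∑ k ∈ Finset.Icc 1 n, cprob μ 𝓕 (A i ∩ A k) ω := by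
              refine Finset.sum_le_sum_of_subset_of_nonneg hsub fun i _ _ => ?_
              exact Finset.sum_nonneg fun k _ => hikω i k
      have hTnn : 0 ≤ T n := Finset.sum_nonneg fun i _ => Finset.sum_nonneg fun k _ => hikω i k
      have hTlt : T n < (1 + ε) * S n ^ 2 := by
        have := h1
        rw [div_lt_iff₀ (by positivity)] at this
        linarith [this]
      have hkey2 := hkeyω n
      have hSm : (1 - ε) * S n ≤ ∑ k ∈ Finset.Icc (m + 1) n, cprob μ 𝓕 (A k) ω := by
        nlinarith [hsplit, hcε]
      have hSmnn : 0 ≤ (1 - ε) * S n := by nlinarith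
      have hsq : ((1 - ε) * S n) ^ 2 ≤ (∑ k ∈ Finset.Icc (m + 1) n, cprob μ 𝓕 (A k) ω) ^ 2 :=
        pow_le_pow_left₀ hSmnn hSm 2
      have hchain : ((1 - ε) * S n) ^ 2 ≤ T n * V := by
        refine le_trans (le_trans hsq hkey2) ?_
        calc (∑ i ∈ Finset.Icc (m + 1) n, ∑ k ∈ Finset.Icc (m + 1) n,
            cprob μ 𝓕 (A i ∩ A k) ω) * cprob μ 𝓕 (⋃ k ∈ Finset.Icc (m + 1) n, A k) ω
            ≤ T n * cprob μ 𝓕 (⋃ k ∈ Finset.Icc (m + 1) n, A k) ω := by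
              exact mul_le_mul_of_nonneg_right hTmT (hUnn n)
          _ ≤ T n * V := mul_le_mul_of_nonneg_left (hmonoω n) hTnn
      nlinarith [hchain, hTlt, sq_nonneg (S n), hSnpos, mul_pos hSnpos hSnpos]
    by_contra hVlt
    push_neg at hVlt
    have hε : (0:ℝ) < (1 - V) / 4 := by linarith
    have hε1 : (1 - V) / 4 < 1 := by linarith
    have := hclaim ((1 - V) / 4) hε hε1
    nlinarith [this, hVnn, hVle]
  -- step 2 : μ (B m) = 1 for all m
  have hstep2 : ∀ m : ℕ, μ (B m) = 1 := by
    have haux : ∀ m : ℕ, μ (B (m + 1)) = 1 := by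
      intro m
      have hint : ∫ ω, cprob μ 𝓕 (B (m + 1)) ω ∂μ = (μ (B (m + 1))).toReal :=
        integral_cprob μ h𝓕 (hBm (m + 1))
      have hge : (1 : ℝ) ≤ ∫ ω, cprob μ 𝓕 (B (m + 1)) ω ∂μ := by
        have h1 : ∫ _ω : Ω, (1 : ℝ) ∂μ = 1 := by simp
        rw [← h1]
        exact integral_mono_ae (integrable_const 1) integrable_condExp (hstep1 m)
      rw [hint] at hge
      have hle : μ (B (m + 1)) ≤ 1 := prob_le_one
      refine le_antisymm hle ?_
      rw [← ENNReal.toReal_le_toReal ENNReal.one_ne_top (measure_ne_top μ _)]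
      simpa using hge
    intro m
    match m with
    | 0 =>
      refine le_antisymm prob_le_one ?_
      rw [← haux 0]
      refine measure_mono ?_
      intro ω hω
      obtain ⟨k, hk, hωk⟩ := Set.mem_iUnion₂.1 hω
      exact Set.mem_iUnion₂.2 ⟨k, Nat.zero_le k, hωk⟩
    | Nat.succ j => exact haux j
  -- step 3 : limsup A has full measure
  have hlimsup : μ (limsup A atTop)ᶜ = 0 := by
    have heq : limsup A atTop = ⋂ m, B m := by
      rw [limsup_eq_iInf_iSup_of_nat]
      rfl
    rw [heq, Set.compl_iInter]
    rw [measure_iUnion_null_iff]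
    intro m
    rw [measure_compl (hBm m) (measure_ne_top μ _), hstep2 m, measure_univ]
    simp
  have hae : ∀ᵐ ω ∂μ, ω ∈ limsup A atTop := by
    rw [ae_iff]
    exact hlimsup
  have hindeq : (limsup A atTop).indicator (fun _ => (1 : ℝ)) =ᵐ[μ] fun _ => (1 : ℝ) := by
    filter_upwards [hae] with ω hω
    simp [Set.indicator_of_mem hω]
  calc cprob μ 𝓕 (limsup A atTop) =ᵐ[μ] μ[fun _ => (1 : ℝ)|𝓕] := condExp_congr_ae hindeq
    _ = fun _ => (1 : ℝ) := condExp_const h𝓕 1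
    _ =ᵐ[μ] (1 : Ω → ℝ) := by rfl
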